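/- Let d ∈ ℕ with d ≥ 1, let γ ∈ (0,1), let N > 0 be a real number, let Σ and Σ^π be symmetric positive definite d×d real matrices, Σ̂ an invertible d×d real matrix, and M, M̂ d×d real matrices satisfying ‖(Σ^π)^{1/2} M (Σ^π)^{-1/2}‖_2 ≤ 1 and ‖(Σ^π)^{1/2} (M̂ − M) (Σ^π)^{-1/2}‖_2 ≤ (1−γ)/(2γ). Let ν_0, ΔW ∈ ℝ^d, and set ΔX := NΣ̂^{-1} − Σ^{-1}, ν̂_h := (M̂ᵀ)^h ν_0, and ν_h := (Mᵀ)^h ν_0. Then the series E_2 := Σ_{h=0}^{∞} γ^h ( N ν̂_hᵀΣ̂^{-1} − ν_hᵀΣ^{-1} ) ΔW converges absolutely, and |E_2| ≤ (1/(1−γ)) · √(ν_0ᵀ(Σ^π)^{-1}ν_0) · ‖(Σ^π)^{1/2}Σ^{-1/2}‖_2 · ‖Σ^{-1/2}ΔW‖_2 · ( (2γ/(1−γ)) · ‖(Σ^π)^{1/2} (M̂ − M) (Σ^π)^{-1/2}‖_2 + 2 ‖Σ^{1/2} (ΔX) Σ^{1/2}‖_2 ). -/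

import Mathlib

open Matrix

open scoped ComplexOrder in
/-- The square root of a positive semidefinite matrix (as in the older Mathlib, where
`Matrix.PosSemidef.sqrt` was defined; it is no longer in Mathlib). -/
noncomputable def Matrix.PosSemidef.sqrt {n 𝕜 : Type*} [Fintype n] [RCLike 𝕜] [DecidableEq n]
    {A : Matrix n n 𝕜} (hA : A.PosSemidef) : Matrix n n 𝕜 :=
  hA.1.eigenvectorUnitary.1 * diagonal ((↑) ∘ (√·) ∘ hA.1.eigenvalues) *
    (star hA.1.eigenvectorUnitary : Matrix n n 𝕜)

/-- The spectral norm (ℓ²→ℓ² operator norm) of a real square matrix. -/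
noncomputable def specNorm {d : ℕ} (A : Matrix (Fin d) (Fin d) ℝ) : ℝ :=
  ‖Matrix.toEuclideanCLM (𝕜 := ℝ) A‖

/-- The Euclidean norm of a vector in `ℝ^d`. -/
noncomputable def evnorm {d : ℕ} (v : Fin d → ℝ) : ℝ := Real.sqrt (v ⬝ᵥ v)

section Aux
variable {d : ℕ}

lemma Matrix.PosSemidef.sqrt_mul_self {n : Type*} [Fintype n] [DecidableEq n]
    {A : Matrix n n ℝ} (hA : A.PosSemidef) : hA.sqrt * hA.sqrt = A := by
  have hU : (star hA.1.eigenvectorUnitary : Matrix n n ℝ) * hA.1.eigenvectorUnitary = 1 :=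
    Unitary.coe_star_mul_self _
  have hD : diagonal ((RCLike.ofReal : ℝ → ℝ) ∘ (√·) ∘ hA.1.eigenvalues) * diagonal ((RCLike.ofReal : ℝ → ℝ) ∘ (√·) ∘ hA.1.eigenvalues)
      = diagonal (RCLike.ofReal ∘ hA.1.eigenvalues : n → ℝ) := by
    rw [diagonal_mul_diagonal]
    congr 1; funext i
    simp [Real.mul_self_sqrt (hA.eigenvalues_nonneg i)]
  unfold Matrix.PosSemidef.sqrt
  conv_rhs => rw [hA.1.spectral_theorem, Unitary.conjStarAlgAut_apply]
  calc _ = (hA.1.eigenvectorUnitary : Matrix n n ℝ) * (diagonal ((RCLike.ofReal : ℝ → ℝ) ∘ (√·) ∘ hA.1.eigenvalues)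
        * ((star hA.1.eigenvectorUnitary : Matrix n n ℝ) * (hA.1.eigenvectorUnitary : Matrix n n ℝ))
        * diagonal ((RCLike.ofReal : ℝ → ℝ) ∘ (√·) ∘ hA.1.eigenvalues)) * (star hA.1.eigenvectorUnitary : Matrix n n ℝ) := by
          simp only [Matrix.mul_assoc]
    _ = _ := by rw [hU, Matrix.mul_one, hD]

lemma Matrix.PosSemidef.sqrt_isHermitian {n : Type*} [Fintype n] [DecidableEq n]
    {A : Matrix n n ℝ} (hA : A.PosSemidef) : hA.sqrt.IsHermitian := by
  unfold Matrix.PosSemidef.sqrt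
  unfold Matrix.IsHermitian
  rw [conjTranspose_mul, conjTranspose_mul, diagonal_conjTranspose]
  simp [Matrix.mul_assoc, star_eq_conjTranspose, conjTranspose_eq_transpose_of_trivial]

lemma specNorm_nonneg' (A : Matrix (Fin d) (Fin d) ℝ) : 0 ≤ specNorm A := norm_nonneg _

lemma specNorm_mul_le' (A B : Matrix (Fin d) (Fin d) ℝ) :
    specNorm (A * B) ≤ specNorm A * specNorm B := by
  unfold specNorm; rw [_root_.map_mul]; exact norm_mul_le _ _

lemma specNorm_add_le' (A B : Matrix (Fin d) (Fin d) ℝ) :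
    specNorm (A + B) ≤ specNorm A + specNorm B := by
  unfold specNorm; rw [map_add]; exact norm_add_le _ _

lemma specNorm_pow_le' (A : Matrix (Fin d) (Fin d) ℝ) {a : ℝ} (ha : specNorm A ≤ a)
    (ha0 : 0 ≤ a) (h : ℕ) : specNorm (A ^ h) ≤ a ^ h := by
  induction h with
  | zero =>
      have : specNorm (A ^ 0) ≤ 1 := by
        unfold specNorm
        rw [pow_zero, _root_.map_one]
        exact ContinuousLinearMap.norm_id_le
      simpa using this
  | succ n ih =>
    calc specNorm (A ^ (n+1)) = specNorm (A ^ n * A) := by rw [pow_succ]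
    _ ≤ specNorm (A ^ n) * specNorm A := specNorm_mul_le' _ _
    _ ≤ a ^ n * a := mul_le_mul ih ha (specNorm_nonneg' _) (pow_nonneg ha0 _)
    _ = a ^ (n+1) := by ring

lemma pow_sub_pow_norm' (P Q : Matrix (Fin d) (Fin d) ℝ) {ε : ℝ} (hε : 0 ≤ ε)
    (hQ : specNorm Q ≤ 1) (hD : specNorm (P - Q) ≤ ε) (h : ℕ) :
    specNorm (P ^ h - Q ^ h) ≤ (1 + ε) ^ h - 1 := by
  have hP : specNorm P ≤ 1 + ε := by
    have := specNorm_add_le' Q (P - Q)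
    simp only [add_sub_cancel] at this
    linarith
  induction h with
  | zero =>
      simp only [pow_zero, sub_self]
      unfold specNorm
      rw [map_zero, norm_zero]
  | succ n ih =>
    have key : P ^ (n+1) - Q ^ (n+1) = P ^ n * (P - Q) + (P ^ n - Q ^ n) * Q := by
      rw [pow_succ, pow_succ]; noncomm_ring
    calc specNorm (P ^ (n+1) - Q ^ (n+1))
        ≤ specNorm (P ^ n * (P - Q)) + specNorm ((P ^ n - Q ^ n) * Q) := by
          rw [key]; exact specNorm_add_le' _ _
      _ ≤ specNorm (P ^ n) * specNorm (P - Q) + specNorm (P ^ n - Q ^ n) * specNorm Q := by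
          gcongr <;> [exact specNorm_mul_le' _ _; exact specNorm_mul_le' _ _]
      _ ≤ (1 + ε) ^ n * ε + ((1 + ε) ^ n - 1) * 1 := by
          have h1 : specNorm (P ^ n) * specNorm (P - Q) ≤ (1 + ε) ^ n * ε :=
            mul_le_mul (specNorm_pow_le' P hP (by linarith) n) hD (specNorm_nonneg' _)
              (pow_nonneg (by linarith) n)
          have h2 : specNorm (P ^ n - Q ^ n) * specNorm Q ≤ ((1 + ε) ^ n - 1) * 1 := by
            have hnn : (0:ℝ) ≤ specNorm Q := specNorm_nonneg' _
            have hpow : (1:ℝ) ≤ (1 + ε) ^ n := one_le_pow₀ (by linarith)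
            exact mul_le_mul ih hQ hnn (by linarith)
          linarith
      _ = (1 + ε) ^ (n+1) - 1 := by ring

lemma evnorm_eq' (v : Fin d → ℝ) :
    evnorm v = ‖(WithLp.equiv 2 (Fin d → ℝ)).symm v‖ := by
  rw [EuclideanSpace.norm_eq]
  unfold evnorm dotProduct
  congr 1
  apply Finset.sum_congr rfl
  intro i _
  simp [WithLp.equiv_symm_apply, PiLp.toLp_apply, sq, Real.norm_eq_abs, abs_mul_abs_self]

lemma evnorm_nonneg' (v : Fin d → ℝ) : 0 ≤ evnorm v := Real.sqrt_nonneg _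

lemma evnorm_mulVec_le' (A : Matrix (Fin d) (Fin d) ℝ) (v : Fin d → ℝ) :
    evnorm (A *ᵥ v) ≤ specNorm A * evnorm v := by
  rw [evnorm_eq', evnorm_eq']
  have : (WithLp.equiv 2 (Fin d → ℝ)).symm (A *ᵥ v)
      = Matrix.toEuclideanCLM (𝕜 := ℝ) A ((WithLp.equiv 2 (Fin d → ℝ)).symm v) := by
    rfl
  rw [this]
  exact (Matrix.toEuclideanCLM (𝕜 := ℝ) A).le_opNorm _

lemma abs_dot_le' (u v : Fin d → ℝ) : |u ⬝ᵥ v| ≤ evnorm u * evnorm v := by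
  rw [evnorm_eq', evnorm_eq']
  have h := abs_real_inner_le_norm ((WithLp.equiv 2 (Fin d → ℝ)).symm u)
    ((WithLp.equiv 2 (Fin d → ℝ)).symm v)
  have heq : (inner ℝ ((WithLp.equiv 2 (Fin d → ℝ)).symm u)
      ((WithLp.equiv 2 (Fin d → ℝ)).symm v) : ℝ) = u ⬝ᵥ v := by
    simp [EuclideanSpace.inner_eq_star_dotProduct, dotProduct, mul_comm]
  rwa [heq] at h

lemma abs_dot_mulVec_le' (u : Fin d → ℝ) (C : Matrix (Fin d) (Fin d) ℝ) (v : Fin d → ℝ) :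
    |u ⬝ᵥ C *ᵥ v| ≤ evnorm u * (specNorm C * evnorm v) :=
  le_trans (abs_dot_le' u (C *ᵥ v))
    (mul_le_mul_of_nonneg_left (evnorm_mulVec_le' C v) (evnorm_nonneg' u))

lemma dotHelper (X C : Matrix (Fin d) (Fin d) ℝ) (u w : Fin d → ℝ) :
    ((Xᵀ) *ᵥ u) ⬝ᵥ (C *ᵥ w) = u ⬝ᵥ (X * C) *ᵥ w := by
  rw [mulVec_transpose, ← dotProduct_mulVec, mulVec_mulVec]

lemma conjPowEq' (A X : Matrix (Fin d) (Fin d) ℝ) (hA1 : A⁻¹ * A = 1) (h : ℕ) :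
    X ^ h = A⁻¹ * (A * X * A⁻¹) ^ h * A := by
  induction h with
  | zero => simp [hA1]
  | succ n ih =>
    rw [pow_succ, pow_succ, ih]
    simp only [Matrix.mul_assoc, hA1, Matrix.mul_one]

end Aux

set_option maxHeartbeats 1000000 in
/-- **Deterministic bound on the high-order error term in infinite-horizon discounted
off-policy evaluation.**  The series `E₂ = Σ_h γ^h (Nν̂_hᵀΣ̂⁻¹ − ν_hᵀΣ⁻¹)ΔW` converges
absolutely and is bounded using the contraction of the true conditional mean embedding
with respect to the invariant second-moment matrix `Σ^π`. -/
theorem discounted_E2_bound (d : ℕ) (hd : 1 ≤ d)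
    (γ : ℝ) (hγ : γ ∈ Set.Ioo (0 : ℝ) 1) (N : ℝ) (hN : 0 < N)
    (S Spi : Matrix (Fin d) (Fin d) ℝ) (hS : S.PosDef) (hSpi : Spi.PosDef)
    (Shat : Matrix (Fin d) (Fin d) ℝ) (hShat : IsUnit Shat)
    (M Mhat : Matrix (Fin d) (Fin d) ℝ)
    (hcontr : specNorm (hSpi.posSemidef.sqrt * M * (hSpi.posSemidef.sqrt)⁻¹) ≤ 1)
    (hclose : specNorm (hSpi.posSemidef.sqrt * (Mhat - M) * (hSpi.posSemidef.sqrt)⁻¹)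
        ≤ (1 - γ) / (2 * γ))
    (ν0 ΔW : Fin d → ℝ)
    (ΔX : Matrix (Fin d) (Fin d) ℝ) (hΔX : ΔX = N • Shat⁻¹ - S⁻¹)
    (νhat ν : ℕ → Fin d → ℝ)
    (hνhat : ∀ h, νhat h = (Mhatᵀ) ^ h *ᵥ ν0)
    (hν : ∀ h, ν h = (Mᵀ) ^ h *ᵥ ν0)
    (f : ℕ → ℝ)
    (hf : ∀ h, f h = γ ^ h * (N * (νhat h ⬝ᵥ Shat⁻¹ *ᵥ ΔW) - ν h ⬝ᵥ S⁻¹ *ᵥ ΔW)) :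
    Summable (fun h => |f h|) ∧
    |∑' h, f h| ≤ (1 / (1 - γ)) * Real.sqrt (ν0 ⬝ᵥ Spi⁻¹ *ᵥ ν0)
        * specNorm (hSpi.posSemidef.sqrt * (hS.posSemidef.sqrt)⁻¹)
        * evnorm ((hS.posSemidef.sqrt)⁻¹ *ᵥ ΔW)
        * ((2 * γ / (1 - γ))
              * specNorm (hSpi.posSemidef.sqrt * (Mhat - M) * (hSpi.posSemidef.sqrt)⁻¹)
            + 2 * specNorm (hS.posSemidef.sqrt * ΔX * hS.posSemidef.sqrt)) := by
  obtain ⟨hγ0, hγ1⟩ := hγ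
  set A : Matrix (Fin d) (Fin d) ℝ := hSpi.posSemidef.sqrt with hAdef
  set B : Matrix (Fin d) (Fin d) ℝ := hS.posSemidef.sqrt with hBdef
  -- basic facts about A and B
  have hAA : A * A = Spi := hSpi.posSemidef.sqrt_mul_self
  have hBB : B * B = S := hS.posSemidef.sqrt_mul_self
  have hdetA : IsUnit A.det := by
    have hdet : A.det * A.det = Spi.det := by rw [← det_mul, hAA]
    have := hSpi.det_pos
    rw [isUnit_iff_ne_zero]
    intro h; rw [h, zero_mul] at hdet; linarith
  have hdetB : IsUnit B.det := by
    have hdet : B.det * B.det = S.det := by rw [← det_mul, hBB]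
    have := hS.det_pos
    rw [isUnit_iff_ne_zero]
    intro h; rw [h, zero_mul] at hdet; linarith
  have hA1 : A⁻¹ * A = 1 := nonsing_inv_mul A hdetA
  have hA2 : A * A⁻¹ = 1 := mul_nonsing_inv A hdetA
  have hB1 : B⁻¹ * B = 1 := nonsing_inv_mul B hdetB
  have hB2 : B * B⁻¹ = 1 := mul_nonsing_inv B hdetB
  have hAsym : Aᵀ = A := by
    rw [← conjTranspose_eq_transpose_of_trivial]
    exact hSpi.posSemidef.sqrt_isHermitian
  have hAinvsym : (A⁻¹)ᵀ = A⁻¹ := by rw [transpose_nonsing_inv, hAsym]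
  have hSpiInv : Spi⁻¹ = A⁻¹ * A⁻¹ := by rw [← hAA, Matrix.mul_inv_rev]
  have hSInv : S⁻¹ = B⁻¹ * B⁻¹ := by rw [← hBB, Matrix.mul_inv_rev]
  -- abbreviations
  set P : Matrix (Fin d) (Fin d) ℝ := A * Mhat * A⁻¹ with hPdef
  set Q : Matrix (Fin d) (Fin d) ℝ := A * M * A⁻¹ with hQdef
  set ε : ℝ := specNorm (A * (Mhat - M) * A⁻¹) with hεdef
  set t : ℝ := specNorm (B * ΔX * B) with htdef
  set KAB : ℝ := specNorm (A * B⁻¹) with hKdef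
  set n0 : ℝ := evnorm (A⁻¹ *ᵥ ν0) with hn0def
  set nW : ℝ := evnorm (B⁻¹ *ᵥ ΔW) with hnWdef
  set c : ℝ := n0 * (KAB * nW) with hcdef
  set r : ℝ := 1 + ε with hrdef
  clear_value P Q ε t KAB n0 nW c r
  have hε0 : 0 ≤ ε := hεdef ▸ specNorm_nonneg' _
  have ht0 : 0 ≤ t := htdef ▸ specNorm_nonneg' _
  have hK0 : 0 ≤ KAB := hKdef ▸ specNorm_nonneg' _
  have hn00 : 0 ≤ n0 := hn0def ▸ evnorm_nonneg' _
  have hnW0 : 0 ≤ nW := hnWdef ▸ evnorm_nonneg' _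
  have hc0 : 0 ≤ c := hcdef ▸ mul_nonneg hn00 (mul_nonneg hK0 hnW0)
  have hPQ : P - Q = A * (Mhat - M) * A⁻¹ := by rw [hPdef, hQdef]; noncomm_ring
  have hDε : specNorm (P - Q) ≤ ε := by rw [hPQ, hεdef]
  have hQ1 : specNorm Q ≤ 1 := hcontr
  have hP : specNorm P ≤ r := by
    have := specNorm_add_le' Q (P - Q)
    simp only [add_sub_cancel] at this
    rw [hrdef]; linarith [hDε]
  -- gamma facts
  have hγε : γ * ε ≤ (1 - γ) / 2 := by
    have := mul_le_mul_of_nonneg_left hclose (le_of_lt hγ0)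
    calc γ * ε ≤ γ * ((1 - γ) / (2 * γ)) := this
    _ = (1 - γ) / 2 := by field_simp
  have hu0 : (1 - γ) / 2 ≤ 1 - γ * r := by rw [hrdef]; nlinarith
  have hupos : 0 < 1 - γ * r := lt_of_lt_of_le (by linarith) hu0
  have hγr0 : 0 ≤ γ * r := mul_nonneg (le_of_lt hγ0) (by rw [hrdef]; linarith)
  have hγr1 : γ * r < 1 := by linarith
  -- rewrite f
  have hf2 : ∀ h, f h = γ ^ h *
      (ν0 ⬝ᵥ ((Mhat ^ h - M ^ h) * S⁻¹) *ᵥ ΔW + ν0 ⬝ᵥ (Mhat ^ h * ΔX) *ᵥ ΔW) := by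
    intro h
    rw [hf h, hνhat h, hν h, ← transpose_pow, ← transpose_pow, dotHelper, dotHelper]
    have hsm : N • Shat⁻¹ = S⁻¹ + ΔX := by rw [hΔX]; abel
    have step1 : N * (ν0 ⬝ᵥ (Mhat ^ h * Shat⁻¹) *ᵥ ΔW)
        = ν0 ⬝ᵥ (Mhat ^ h * (S⁻¹ + ΔX)) *ᵥ ΔW := by
      rw [← hsm, Matrix.mul_smul, smul_mulVec, dotProduct_smul, smul_eq_mul]
    rw [step1]
    have expand : Mhat ^ h * (S⁻¹ + ΔX) = (Mhat ^ h - M ^ h) * S⁻¹ + M ^ h * S⁻¹ + Mhat ^ h * ΔX := by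
      noncomm_ring
    rw [expand]
    simp only [add_mulVec, dotProduct_add]
    ring
  -- sandwich bound
  have sandwich : ∀ C : Matrix (Fin d) (Fin d) ℝ,
      |ν0 ⬝ᵥ (A⁻¹ * C * B⁻¹) *ᵥ ΔW| ≤ n0 * (specNorm C * nW) := by
    intro C
    have e1 : (A⁻¹ * C * B⁻¹) *ᵥ ΔW = A⁻¹ *ᵥ (C *ᵥ (B⁻¹ *ᵥ ΔW)) := by
      rw [mulVec_mulVec, mulVec_mulVec]
    have e2 : ν0 ⬝ᵥ (A⁻¹ * C * B⁻¹) *ᵥ ΔW = (A⁻¹ *ᵥ ν0) ⬝ᵥ (C *ᵥ (B⁻¹ *ᵥ ΔW)) := by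
      rw [e1, dotProduct_mulVec, ← mulVec_transpose, hAinvsym]
    rw [e2, hn0def, hnWdef]
    exact abs_dot_mulVec_le' _ _ _
  -- bound for each term
  have key1 : ∀ h, |ν0 ⬝ᵥ ((Mhat ^ h - M ^ h) * S⁻¹) *ᵥ ΔW| ≤ n0 * ((r ^ h - 1) * KAB * nW) := by
    intro h
    have hid : (Mhat ^ h - M ^ h) * S⁻¹ = A⁻¹ * ((P ^ h - Q ^ h) * (A * B⁻¹)) * B⁻¹ := by
      rw [hSInv, conjPowEq' A Mhat hA1 h, conjPowEq' A M hA1 h, ← hPdef, ← hQdef]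
      noncomm_ring
    rw [hid]
    refine le_trans (sandwich _) ?_
    have hnorm : specNorm ((P ^ h - Q ^ h) * (A * B⁻¹)) ≤ (r ^ h - 1) * KAB := by
      refine le_trans (specNorm_mul_le' _ _) ?_
      have h1 : specNorm (P ^ h - Q ^ h) ≤ r ^ h - 1 := by
        have := pow_sub_pow_norm' P Q hε0 hQ1 hDε h
        rw [← hrdef] at this
        exact this
      have h2 : specNorm (A * B⁻¹) ≤ KAB := le_of_eq hKdef.symm
      have h3 : (1:ℝ) ≤ r ^ h := one_le_pow₀ (by rw [hrdef]; linarith)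
      exact mul_le_mul h1 h2 (specNorm_nonneg' _) (by linarith)
    have hmul := mul_le_mul_of_nonneg_right hnorm hnW0
    nlinarith [mul_le_mul_of_nonneg_left hmul hn00]
  have key2 : ∀ h, |ν0 ⬝ᵥ (Mhat ^ h * ΔX) *ᵥ ΔW| ≤ n0 * (r ^ h * KAB * t * nW) := by
    intro h
    have hB1' : ∀ X : Matrix (Fin d) (Fin d) ℝ, B⁻¹ * (B * X) = X := by
      intro X; rw [← Matrix.mul_assoc, hB1, Matrix.one_mul]
    have hid : Mhat ^ h * ΔX = A⁻¹ * (P ^ h * ((A * B⁻¹) * (B * ΔX * B))) * B⁻¹ := by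
      rw [conjPowEq' A Mhat hA1 h, ← hPdef]
      simp only [Matrix.mul_assoc, hB2, Matrix.mul_one, hB1']
    rw [hid]
    refine le_trans (sandwich _) ?_
    have hr0 : (0:ℝ) ≤ r := by rw [hrdef]; linarith
    have hnorm : specNorm (P ^ h * ((A * B⁻¹) * (B * ΔX * B))) ≤ r ^ h * (KAB * t) := by
      refine le_trans (specNorm_mul_le' _ _) ?_
      have hp : specNorm (P ^ h) ≤ r ^ h := specNorm_pow_le' P hP hr0 h
      have hq : specNorm ((A * B⁻¹) * (B * ΔX * B)) ≤ KAB * t := by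
        refine le_trans (specNorm_mul_le' _ _) ?_
        rw [hKdef, htdef]
      exact mul_le_mul hp hq (specNorm_nonneg' _) (pow_nonneg hr0 h)
    have hmul := mul_le_mul_of_nonneg_right hnorm hnW0
    nlinarith [mul_le_mul_of_nonneg_left hmul hn00]
  -- per-term bound for f
  have habs : ∀ h, |f h| ≤ (c + c * t) * (γ * r) ^ h - c * γ ^ h := by
    intro h
    rw [hf2 h, abs_mul, abs_pow, abs_of_pos hγ0]
    have habs2 : |ν0 ⬝ᵥ ((Mhat ^ h - M ^ h) * S⁻¹) *ᵥ ΔW + ν0 ⬝ᵥ (Mhat ^ h * ΔX) *ᵥ ΔW|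
        ≤ n0 * ((r ^ h - 1) * KAB * nW) + n0 * (r ^ h * KAB * t * nW) :=
      le_trans (abs_add_le _ _) (add_le_add (key1 h) (key2 h))
    calc γ ^ h * |ν0 ⬝ᵥ ((Mhat ^ h - M ^ h) * S⁻¹) *ᵥ ΔW + ν0 ⬝ᵥ (Mhat ^ h * ΔX) *ᵥ ΔW|
        ≤ γ ^ h * (n0 * ((r ^ h - 1) * KAB * nW) + n0 * (r ^ h * KAB * t * nW)) :=
          mul_le_mul_of_nonneg_left habs2 (pow_nonneg hγ0.le h)
      _ = (c + c * t) * (γ * r) ^ h - c * γ ^ h := by rw [hcdef, mul_pow]; ring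
  -- summability
  have hsum1 : Summable (fun h : ℕ => (γ * r) ^ h) := summable_geometric_of_lt_one hγr0 hγr1
  have hsum2 : Summable (fun h : ℕ => γ ^ h) := summable_geometric_of_lt_one hγ0.le hγ1
  have hgsum : Summable (fun h : ℕ => (c + c * t) * (γ * r) ^ h - c * γ ^ h) :=
    (hsum1.mul_left _).sub (hsum2.mul_left _)
  have hfabs : Summable (fun h => |f h|) :=
    Summable.of_nonneg_of_le (fun h => abs_nonneg _) habs hgsum
  refine ⟨hfabs, ?_⟩
  have htsum : ∑' h : ℕ, ((c + c * t) * (γ * r) ^ h - c * γ ^ h)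
      = (c + c * t) * (1 - γ * r)⁻¹ - c * (1 - γ)⁻¹ := by
    rw [Summable.tsum_sub (hsum1.mul_left _) (hsum2.mul_left _), tsum_mul_left, tsum_mul_left,
      tsum_geometric_of_lt_one hγr0 hγr1, tsum_geometric_of_lt_one hγ0.le hγ1]
  -- identify n0
  have hdot : (A⁻¹ *ᵥ ν0) ⬝ᵥ (A⁻¹ *ᵥ ν0) = ν0 ⬝ᵥ Spi⁻¹ *ᵥ ν0 := by
    nth_rewrite 1 [← hAinvsym]
    rw [dotHelper, ← hSpiInv]
  have hn0eq : Real.sqrt (ν0 ⬝ᵥ Spi⁻¹ *ᵥ ν0) = n0 := by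
    rw [hn0def]; unfold evnorm; rw [hdot]
  rw [hn0eq]
  have hs : (0:ℝ) < 1 - γ := by linarith
  have hne1 : 1 - γ * r ≠ 0 := ne_of_gt hupos
  have hne2 : 1 - γ ≠ 0 := ne_of_gt hs
  calc |∑' h, f h| ≤ ∑' h, |f h| := by
        have := norm_tsum_le_tsum_norm (f := f) (by simpa [Real.norm_eq_abs] using hfabs)
        simpa [Real.norm_eq_abs] using this
    _ ≤ ∑' h : ℕ, ((c + c * t) * (γ * r) ^ h - c * γ ^ h) := Summable.tsum_le_tsum habs hfabs hgsum
    _ = (c + c * t) * (1 - γ * r)⁻¹ - c * (1 - γ)⁻¹ := htsum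
    _ = c * ((1 - γ * r)⁻¹ - (1 - γ)⁻¹) + (c * t) * (1 - γ * r)⁻¹ := by ring
    _ ≤ c * (2 * γ * ε / ((1 - γ) * (1 - γ))) + (c * t) * (2 / (1 - γ)) := by
        have e3 : (1 - γ * r)⁻¹ - (1 - γ)⁻¹ = γ * ε / ((1 - γ * r) * (1 - γ)) := by
          have hx : γ * ε = (1 - γ) - (1 - γ * r) := by rw [hrdef]; ring
          rw [inv_sub_inv hne1 hne2, ← hx]
        have hkey : (1 - γ) ≤ 2 * (1 - γ * r) := by linarith [hu0]
        have e4 : γ * ε / ((1 - γ * r) * (1 - γ)) ≤ 2 * γ * ε / ((1 - γ) * (1 - γ)) := by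
          rw [div_le_div_iff₀ (mul_pos hupos hs) (mul_pos hs hs)]
          nlinarith [mul_le_mul_of_nonneg_left hkey (mul_nonneg (mul_nonneg hγ0.le hε0) hs.le)]
        have e5 : (1 - γ * r)⁻¹ ≤ 2 / (1 - γ) := by
          rw [inv_eq_one_div, div_le_div_iff₀ hupos hs]
          linarith [hu0]
        have t1 : c * ((1 - γ * r)⁻¹ - (1 - γ)⁻¹) ≤ c * (2 * γ * ε / ((1 - γ) * (1 - γ))) := by
          rw [e3]; exact mul_le_mul_of_nonneg_left e4 hc0
        have t2 : (c * t) * (1 - γ * r)⁻¹ ≤ (c * t) * (2 / (1 - γ)) :=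
          mul_le_mul_of_nonneg_left e5 (mul_nonneg hc0 ht0)
        linarith
    _ = 1 / (1 - γ) * n0 * KAB * nW * (2 * γ / (1 - γ) * ε + 2 * t) := by
        rw [hcdef]; field_simp
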